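/- arXiv:2401.00362 — 3 statements merged into one kernel-verified Lean document; each statement's English description precedes it below -/
import Mathlib

section
/- For each n ≥ 4, let X = K_n \ e be the complete graph on n vertices with one edge removed, let u and v be the two non-adjacent vertices, let A be the adjacency matrix of X and U(t) = exp(itA). Then pretty good state transfer occurs between u and v: there is a sequence of times (t_k) with |U(t_k)_{u,v}| → 1. -/
/-!
The adjacency matrix `A` of `K_n \ e` kills `e_u - e_v`, and preserves the vectors that are
constant on `{u, v}` and constant off `{u, v}`; on that plane its eigenvalues are the roots
`θ₊, θ₋ = (n - 3 ± √((n + 1)² - 8)) / 2` of `θ² - (n - 3) θ - 2 (n - 2)`. Expanding `e_v` in these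
eigenvectors gives
`U(t)_{uv} = (e^{itθ₊} (θ₊ - (n - 3)) - e^{itθ₋} (θ₋ - (n - 3))) / (2 (θ₊ - θ₋)) - 1/2`,
which tends to `-1` as soon as both phases tend to `-1`. For `n ≥ 4` the number `(n + 1)² - 8`
lies strictly between `n²` and `(n + 1)²`, so `θ₊` is irrational and Kronecker's theorem gives
times `t ∈ 2πℤ` with `e^{itθ₊} → -1`; as `θ₊ + θ₋ = n - 3` is an integer, `e^{itθ₋}` is then the
inverse phase and tends to `-1` too.
-/

/-- The continuous-time quantum walk transition matrix `U(t) = exp(itM)` of a real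
symmetric matrix `M`, as a complex matrix. -/
noncomputable def qwU {V : Type*} [Fintype V] [DecidableEq V]
    (M : Matrix V V ℝ) (t : ℝ) : Matrix V V ℂ :=
  NormedSpace.exp ((Complex.I * t) • M.map (↑· : ℝ → ℂ))

/-- The 0-1 adjacency matrix of `K_n \ e`, the complete graph on `n` vertices with the
single edge `{u, v}` removed: distinct vertices are adjacent unless they are `u` and
`v`. -/
def knMinusE (n : ℕ) (u v : Fin n) : Matrix (Fin n) (Fin n) ℝ :=
  Matrix.of fun x y =>
    if x = y ∨ (x = u ∧ y = v) ∨ (x = v ∧ y = u) then 0 else 1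

open Complex Filter Matrix Topology
open scoped Real

theorem Matrix.exp_mulVec_of_mulVec_eq_smul {m : Type*} [Fintype m] [DecidableEq m]
    {M : Matrix m m ℂ} {x : m → ℂ} {c : ℂ} (h : M *ᵥ x = c • x) :
    NormedSpace.exp M *ᵥ x = Complex.exp c • x := by
  let : SeminormedRing (Matrix m m ℂ) := Matrix.linftyOpSemiNormedRing
  let : NormedRing (Matrix m m ℂ) := Matrix.linftyOpNormedRing
  let : NormedAlgebra ℂ (Matrix m m ℂ) := Matrix.linftyOpNormedAlgebra
  have hpow : ∀ k : ℕ, M ^ k *ᵥ x = c ^ k • x := by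
    intro k
    induction k with
    | zero => simp
    | succ k ih =>
      rw [pow_succ, ← mulVec_mulVec, h, mulVec_smul, ih, smul_smul, pow_succ, mul_comm]
  have hM := (NormedSpace.exp_series_hasSum_exp' (𝕂 := ℂ) M).map
    (mulVec.addMonoidHomLeft x) (continuous_id.matrix_mulVec continuous_const)
  have hc := (NormedSpace.exp_series_hasSum_exp' (𝕂 := ℂ) c).smul_const x
  rw [Complex.exp_eq_exp_ℂ]
  refine hM.unique (hc.congr_fun fun k => ?_)
  simp [mulVec.addMonoidHomLeft, smul_mulVec, hpow, smul_smul]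

theorem qwU_mulVec_of_mulVec_eq_smul {V : Type*} [Fintype V] [DecidableEq V]
    {M : Matrix V V ℝ} {x : V → ℂ} {θ : ℂ} (h : M.map ofReal *ᵥ x = θ • x) (t : ℝ) :
    qwU M t *ᵥ x = exp (I * t * θ) • x :=
  Matrix.exp_mulVec_of_mulVec_eq_smul <| by rw [smul_mulVec, h, smul_smul]

theorem Irrational.exists_tendsto_exp_two_pi_mul_I {θ : ℝ} (hθ : Irrational θ) (φ : ℝ) :
    ∃ a : ℕ → ℤ, Tendsto (fun k => exp (2 * π * a k * θ * I)) atTop (𝓝 (exp (φ * I))) := by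
  have hdense : DenseRange (· • (θ : AddCircle (1 : ℝ)) : ℤ → AddCircle (1 : ℝ)) := by
    rwa [AddCircle.denseRange_zsmul_coe_iff, div_one]
  obtain ⟨y, hy, hlim⟩ := mem_closure_iff_seq_limit.mp (hdense (φ / (2 * π) : ℝ))
  choose a ha using hy
  have hcont : Continuous fun x : AddCircle (1 : ℝ) => (x.toCircle : ℂ) :=
    continuous_subtype_val.comp AddCircle.continuous_toCircle
  refine ⟨a, ?_⟩
  convert (hcont.tendsto _).comp hlim using 1
  · ext k
    rw [Function.comp_apply, ← ha k]
    dsimp only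
    rw [← AddCircle.coe_zsmul, AddCircle.toCircle_apply_mk, Circle.coe_exp, zsmul_eq_mul]
    congr 1
    push_cast
    ring
  · rw [AddCircle.toCircle_apply_mk, Circle.coe_exp]
    push_cast
    field_simp

theorem Irrational.exists_tendsto_exp_mul_I_neg_one {θ : ℝ} (hθ : Irrational θ) (m : ℤ) :
    ∃ t : ℕ → ℝ, Tendsto (fun k => exp (I * t k * θ)) atTop (𝓝 (-1)) ∧
      Tendsto (fun k => exp (I * t k * (m - θ))) atTop (𝓝 (-1)) := by
  obtain ⟨a, ha⟩ := hθ.exists_tendsto_exp_two_pi_mul_I π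
  rw [exp_pi_mul_I] at ha
  have hphase : ∀ k, exp (I * (2 * π * a k : ℝ) * θ) = exp (2 * π * a k * θ * I) := fun k => by
    congr 1
    push_cast
    ring
  refine ⟨fun k => 2 * π * a k, by simpa only [hphase] using ha, ?_⟩
  have hinv : ∀ k, exp (I * (2 * π * a k : ℝ) * (m - θ)) = (exp (2 * π * a k * θ * I))⁻¹ :=
    fun k => by
      rw [← exp_neg, show I * (2 * π * a k : ℝ) * (m - θ)
        = -(2 * π * a k * θ * I) + (a k * m : ℤ) * (2 * π * I) by push_cast; ring,
        exp_add, exp_int_mul_two_pi_mul_I, mul_one]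
  simpa only [hinv, inv_neg, inv_one] using ha.inv₀ (by norm_num)

theorem Nat.irrational_sqrt_of_sq_lt_of_lt_sq {m N : ℕ} (h₁ : m ^ 2 < N) (h₂ : N < (m + 1) ^ 2) :
    Irrational √(N : ℝ) := by
  rw [irrational_sqrt_natCast_iff]
  rintro ⟨r, hr⟩
  exact Nat.not_exists_sq' h₁ h₂ ⟨r, by rw [hr, sq]⟩

section KnMinusE

variable {n : ℕ} {u v : Fin n}

def vecUV (u v : Fin n) (a b c : ℂ) : Fin n → ℂ :=
  fun i => if i = u then a else if i = v then b else c

theorem sum_vecUV (huv : u ≠ v) (a b c : ℂ) :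
    ∑ i, vecUV u v a b c i = a + b + (n - 2) * c := by
  have h : ∀ i, vecUV u v a b c i
      = c + (if i = u then a - c else 0) + (if i = v then b - c else 0) := by
    intro i
    by_cases hu : i = u <;> by_cases hv : i = v <;> simp_all [vecUV]
  simp only [h, Finset.sum_add_distrib, Finset.sum_ite_eq', Finset.mem_univ, if_true,
    Finset.sum_const, Finset.card_univ, Fintype.card_fin, nsmul_eq_mul]
  ring

theorem knMinusE_map_mulVec (huv : u ≠ v) (x : Fin n → ℂ) :
    (knMinusE n u v).map ofReal *ᵥ x = fun i =>
      ∑ j, x j - x i - (if i = u then x v else 0) - (if i = v then x u else 0) := by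
  ext i
  have h : ∀ j, (knMinusE n u v).map ofReal i j * x j = x j - (if i = j then x j else 0)
      - (if i = u ∧ j = v then x j else 0) - (if i = v ∧ j = u then x j else 0) := by
    intro j
    by_cases hij : i = j <;> by_cases hiu : i = u <;> by_cases hiv : i = v <;>
      by_cases hju : j = u <;> by_cases hjv : j = v <;> simp_all [knMinusE]
  simp only [mulVec, dotProduct, h, Finset.sum_sub_distrib, Finset.sum_ite_eq,
    Finset.mem_univ, if_true]
  by_cases hiu : i = u <;> by_cases hiv : i = v <;> simp_all

theorem knMinusE_mulVec_vecUV (huv : u ≠ v) (a b c : ℂ) :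
    (knMinusE n u v).map ofReal *ᵥ vecUV u v a b c
      = vecUV u v ((n - 2) * c) ((n - 2) * c) (a + b + (n - 3) * c) := by
  rw [knMinusE_map_mulVec huv, sum_vecUV huv]
  ext i
  have hvu := huv.symm
  by_cases hiu : i = u <;> by_cases hiv : i = v <;> simp_all [vecUV] <;> ring

theorem knMinusE_mulVec_vecUV_one_neg_one (huv : u ≠ v) :
    (knMinusE n u v).map ofReal *ᵥ vecUV u v 1 (-1) 0 = (0 : ℂ) • vecUV u v 1 (-1) 0 := by
  rw [knMinusE_mulVec_vecUV huv, zero_smul]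
  ext i
  simp [vecUV]

theorem knMinusE_mulVec_vecUV_eq_smul (huv : u ≠ v) {θ : ℂ}
    (hθ : θ ^ 2 - (n - 3) * θ - 2 * (n - 2) = 0) :
    (knMinusE n u v).map ofReal *ᵥ vecUV u v ((θ - (n - 3)) / 2) ((θ - (n - 3)) / 2) 1
      = θ • vecUV u v ((θ - (n - 3)) / 2) ((θ - (n - 3)) / 2) 1 := by
  rw [knMinusE_mulVec_vecUV huv]
  ext i
  simp only [vecUV, Pi.smul_apply, smul_eq_mul]
  split_ifs <;>
    [linear_combination (-1 / 2 : ℂ) * hθ; linear_combination (-1 / 2 : ℂ) * hθ; ring]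

theorem qwU_knMinusE_apply (huv : u ≠ v) {θ₁ θ₂ : ℂ}
    (h₁ : θ₁ ^ 2 - (n - 3) * θ₁ - 2 * (n - 2) = 0) (h₂ : θ₂ ^ 2 - (n - 3) * θ₂ - 2 * (n - 2) = 0)
    (hne : θ₁ ≠ θ₂) (t : ℝ) :
    qwU (knMinusE n u v) t u v = (exp (I * t * θ₁) * (θ₁ - (n - 3))
      - exp (I * t * θ₂) * (θ₂ - (n - 3))) / (2 * (θ₁ - θ₂)) - 1 / 2 := by
  have hsingle : Pi.single v 1
      = (θ₁ - θ₂)⁻¹ • vecUV u v ((θ₁ - (n - 3)) / 2) ((θ₁ - (n - 3)) / 2) 1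
      - (θ₁ - θ₂)⁻¹ • vecUV u v ((θ₂ - (n - 3)) / 2) ((θ₂ - (n - 3)) / 2) 1
      - (1 / 2 : ℂ) • vecUV u v 1 (-1) 0 := by
    ext i
    by_cases hiu : i = u <;> by_cases hiv : i = v <;>
      simp_all [vecUV] <;> field_simp <;> ring
  calc qwU (knMinusE n u v) t u v = (qwU (knMinusE n u v) t *ᵥ Pi.single v 1) u := by
        simp
    _ = _ := by
      rw [hsingle, mulVec_sub, mulVec_sub, mulVec_smul, mulVec_smul, mulVec_smul,
        qwU_mulVec_of_mulVec_eq_smul (knMinusE_mulVec_vecUV_eq_smul huv h₁),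
        qwU_mulVec_of_mulVec_eq_smul (knMinusE_mulVec_vecUV_eq_smul huv h₂),
        qwU_mulVec_of_mulVec_eq_smul (knMinusE_mulVec_vecUV_one_neg_one huv)]
      simp only [vecUV, Pi.sub_apply, Pi.smul_apply, smul_eq_mul, if_true, mul_zero, exp_zero]
      field_simp

theorem tendsto_qwU_knMinusE_apply (huv : u ≠ v) {θ₁ θ₂ : ℂ}
    (h₁ : θ₁ ^ 2 - (n - 3) * θ₁ - 2 * (n - 2) = 0) (h₂ : θ₂ ^ 2 - (n - 3) * θ₂ - 2 * (n - 2) = 0)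
    (hne : θ₁ ≠ θ₂) {t : ℕ → ℝ} (ht₁ : Tendsto (fun k => exp (I * t k * θ₁)) atTop (𝓝 (-1)))
    (ht₂ : Tendsto (fun k => exp (I * t k * θ₂)) atTop (𝓝 (-1))) :
    Tendsto (fun k => qwU (knMinusE n u v) (t k) u v) atTop (𝓝 (-1)) := by
  simp_rw [qwU_knMinusE_apply huv h₁ h₂ hne]
  convert (((ht₁.mul_const _).sub (ht₂.mul_const _)).div_const _).sub_const _ using 2
  field_simp
  ring

noncomputable def knMinusEEigenvalue (n : ℕ) : ℝ := (n - 3 + √(((n : ℝ) + 1) ^ 2 - 8)) / 2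

theorem knMinusEEigenvalue_isRoot (hn : 2 ≤ n) :
    knMinusEEigenvalue n ^ 2 - (n - 3) * knMinusEEigenvalue n - 2 * (n - 2) = 0 := by
  have hn' : (2 : ℝ) ≤ n := by exact_mod_cast hn
  have := Real.sq_sqrt (show 0 ≤ ((n : ℝ) + 1) ^ 2 - 8 by nlinarith)
  rw [knMinusEEigenvalue]
  linear_combination (1 / 4 : ℝ) * this

theorem irrational_knMinusEEigenvalue (hn : 4 ≤ n) : Irrational (knMinusEEigenvalue n) := by
  have hD : (((n + 1) ^ 2 - 8 : ℕ) : ℝ) = ((n : ℝ) + 1) ^ 2 - 8 := by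
    rw [Nat.cast_sub (by nlinarith)]
    push_cast
    ring
  have hsqrt : Irrational √(((n : ℝ) + 1) ^ 2 - 8) := by
    rw [← hD]
    exact Nat.irrational_sqrt_of_sq_lt_of_lt_sq (m := n) (by rw [add_sq]; omega)
      (Nat.sub_lt (by positivity) (by norm_num))
  convert (hsqrt.div_natCast two_ne_zero).ratCast_add (((n : ℚ) - 3) / 2) using 1
  rw [knMinusEEigenvalue]
  push_cast
  ring

end KnMinusE

/-- For each `n ≥ 4`, pretty good state transfer occurs (with respect to the adjacency
matrix) between the two non-adjacent vertices `u` and `v` of `K_n \ e`. -/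
theorem knMinusE_pgst {n : ℕ} (hn : 4 ≤ n) (u v : Fin n) (huv : u ≠ v) :
    ∃ tk : ℕ → ℝ,
      Filter.Tendsto (fun k => ‖qwU (knMinusE n u v) (tk k) u v‖)
        Filter.atTop (nhds 1) := by
  set θ := knMinusEEigenvalue n
  have hθ : Irrational θ := irrational_knMinusEEigenvalue hn
  have hroot : (θ : ℂ) ^ 2 - (n - 3) * θ - 2 * (n - 2) = 0 := by
    exact_mod_cast knMinusEEigenvalue_isRoot (by omega)
  have hroot' : (((n - 3 : ℤ) : ℂ) - θ) ^ 2 - (n - 3) * (((n - 3 : ℤ) : ℂ) - θ)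
      - 2 * (n - 2) = 0 := by
    push_cast
    linear_combination hroot
  have hne : (θ : ℂ) ≠ ((n - 3 : ℤ) : ℂ) - θ := by
    norm_cast
    exact fun h => hθ.ne_rat (((n : ℚ) - 3) / 2) (by push_cast at h ⊢; linarith)
  obtain ⟨t, ht₁, ht₂⟩ := hθ.exists_tendsto_exp_mul_I_neg_one (n - 3)
  exact ⟨t, by simpa using (tendsto_qwU_knMinusE_apply huv hroot hroot' hne ht₁ ht₂).norm⟩
end

section
/- Let n ≥ 3 and let X = K_2 × K_n be the direct product of the complete graphs K_2 and K_n, with adjacency matrix A(K_2) ⊗ A(K_n) and transition matrix U(t). Then for every vertex (u,v) of X there exists a time t_0 > 0 such that U(t_0)_{(u,v),(u,v)} = 0; in particular, no vertex of K_2 × K_n is sedentary, i.e. inf_{t>0} |U(t)_{(u,v),(u,v)}| = 0. -/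
open Kronecker

/-- The adjacency matrix `J_m - I_m` of the complete graph `K_m`. -/
def completeAdj (m : ℕ) : Matrix (Fin m) (Fin m) ℝ :=
  Matrix.of fun i j => if i = j then 0 else 1

/-! The spectral projections of `A(K_2)` (eigenvalues `1, -1`) and of `A(K_n)` (eigenvalues
`n - 1, -1`) are complete families of orthogonal idempotents, and so are their Kronecker products,
which therefore diagonalise `A(K_2) ⊗ A(K_n)`. Hence `U(t) = ∑ exp(i t λ μ) P_λ ⊗ Q_μ`, and the
diagonal entry is `n⁻¹ cos((n - 1) t) + (1 - n⁻¹) cos t`. This equals `1` at `t = 0` and is at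
most `2 / n - 1 < 0` at `t = π`, so it vanishes somewhere in between. -/

open Matrix

namespace CompleteOrthogonalIdempotents

variable {ι 𝔸 : Type*} [Fintype ι] [DecidableEq ι] {e : ι → 𝔸}

def sumSMulRingHom [Ring 𝔸] [Algebra ℂ 𝔸] (he : CompleteOrthogonalIdempotents e) :
    (ι → ℂ) →+* 𝔸 where
  toFun c := ∑ i, c i • e i
  map_one' := by simpa using he.complete
  map_zero' := by simp
  map_add' c d := by simp [add_smul, Finset.sum_add_distrib]
  map_mul' c d := by
    simp only [Pi.mul_apply, Finset.sum_mul, Finset.mul_sum, smul_mul_smul_comm, he.mul_eq,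
      smul_ite, smul_zero, Finset.sum_ite_eq', Finset.mem_univ, if_true]

theorem exp_sum_smul [NormedRing 𝔸] [NormedAlgebra ℂ 𝔸] [Algebra ℚ 𝔸]
    (he : CompleteOrthogonalIdempotents e) (c : ι → ℂ) :
    NormedSpace.exp (∑ i, c i • e i) = ∑ i, Complex.exp (c i) • e i := by
  have hcont : Continuous he.sumSMulRingHom :=
    continuous_finsetSum _ fun i _ => (continuous_apply i).smul continuous_const
  simpa [sumSMulRingHom, Pi.coe_exp, Complex.exp_eq_exp_ℂ] using
    (NormedSpace.map_exp he.sumSMulRingHom hcont c).symm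

end CompleteOrthogonalIdempotents

theorem Matrix.sum_smul_kronecker_sum_smul {ι κ R l m n p : Type*} [Fintype ι] [Fintype κ]
    [CommSemiring R] (a : ι → R) (b : κ → R) (P : ι → Matrix l m R) (Q : κ → Matrix n p R) :
    (∑ i, a i • P i) ⊗ₖ (∑ j, b j • Q j) = ∑ ij : ι × κ, (a ij.1 * b ij.2) • (P ij.1 ⊗ₖ Q ij.2) := by
  ext ⟨i, k⟩ ⟨j, l⟩
  simp [Matrix.sum_apply, Fintype.sum_prod_type, Finset.sum_mul_sum, mul_mul_mul_comm]

theorem CompleteOrthogonalIdempotents.kronecker {ι κ R m n : Type*} [Fintype ι] [Fintype κ]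
    [CommRing R] [Fintype m] [DecidableEq m] [Fintype n] [DecidableEq n]
    {P : ι → Matrix m m R} {Q : κ → Matrix n n R} (hP : CompleteOrthogonalIdempotents P)
    (hQ : CompleteOrthogonalIdempotents Q) :
    CompleteOrthogonalIdempotents fun ij : ι × κ => P ij.1 ⊗ₖ Q ij.2 where
  idem ij := by
    rw [IsIdempotentElem, ← mul_kronecker_mul, (hP.idem _).eq, (hQ.idem _).eq]
  ortho := by
    rintro ⟨i, j⟩ ⟨i', j'⟩ hne
    rw [← mul_kronecker_mul]
    rcases eq_or_ne i i' with rfl | hi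
    · rw [hQ.ortho fun hj => hne (congrArg _ hj), kronecker_zero]
    · rw [hP.ortho hi, zero_kronecker]
  complete := by
    simpa [hP.complete, hQ.complete] using
      (sum_smul_kronecker_sum_smul (fun _ => (1 : R)) (fun _ => 1) P Q).symm

/-- The spectral projections of `A(K_m)`: onto the constant vectors (eigenvalue `m - 1`) and onto
their orthogonal complement (eigenvalue `-1`). -/
noncomputable def completeEigenproj (m : ℕ) : Fin 2 → Matrix (Fin m) (Fin m) ℂ :=
  ![of fun _ _ => (m : ℂ)⁻¹, 1 - of fun _ _ => (m : ℂ)⁻¹]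

theorem completeOrthogonalIdempotents_completeEigenproj {m : ℕ} (hm : m ≠ 0) :
    CompleteOrthogonalIdempotents (completeEigenproj m) := by
  refine .of_isIdempotentElem ?_
  ext i j
  simp only [mul_apply, of_apply, Finset.sum_const, Finset.card_univ, Fintype.card_fin, nsmul_eq_mul]
  field_simp

theorem completeAdj_map_ofReal {m : ℕ} (hm : m ≠ 0) :
    (completeAdj m).map (↑) = ∑ i, ((![(m : ℝ) - 1, -1] i : ℝ) : ℂ) • completeEigenproj m i := by
  ext i j
  by_cases h : i = j <;> simp [completeAdj, completeEigenproj, h, one_apply] <;> field_simp <;> ring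

theorem qwU_eq_sum_exp_smul {V ι : Type*} [Fintype V] [DecidableEq V] [Fintype ι] [DecidableEq ι]
    {M : Matrix V V ℝ} {θ : ι → ℝ} {E : ι → Matrix V V ℂ} (hE : CompleteOrthogonalIdempotents E)
    (hM : M.map (↑) = ∑ i, (θ i : ℂ) • E i) (t : ℝ) :
    qwU M t = ∑ i, Complex.exp (Complex.I * t * θ i) • E i := by
  -- `exp` does not depend on the norm; any submultiplicative one gives access to `map_exp`.
  let := Matrix.linftyOpNormedRing (n := V) (α := ℂ)
  let := Matrix.linftyOpNormedAlgebra (n := V) (R := ℂ) (α := ℂ)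
  rw [qwU, hM, Finset.smul_sum]
  simp_rw [smul_smul]
  exact hE.exp_sum_smul _

theorem qwU_kronecker_eq_sum {ι κ m n : Type*} [Fintype ι] [DecidableEq ι] [Fintype κ]
    [DecidableEq κ] [Fintype m] [DecidableEq m] [Fintype n] [DecidableEq n]
    {A : Matrix m m ℝ} {B : Matrix n n ℝ} {θ : ι → ℝ} {φ : κ → ℝ}
    {P : ι → Matrix m m ℂ} {Q : κ → Matrix n n ℂ} (hP : CompleteOrthogonalIdempotents P)
    (hQ : CompleteOrthogonalIdempotents Q) (hA : A.map (↑) = ∑ i, (θ i : ℂ) • P i)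
    (hB : B.map (↑) = ∑ j, (φ j : ℂ) • Q j) (t : ℝ) :
    qwU (A ⊗ₖ B) t =
      ∑ ij : ι × κ, Complex.exp (Complex.I * t * (θ ij.1 * φ ij.2 : ℝ)) • (P ij.1 ⊗ₖ Q ij.2) := by
  refine qwU_eq_sum_exp_smul (hP.kronecker hQ) ?_ t
  have hmap : (A ⊗ₖ B).map ((↑) : ℝ → ℂ) = A.map (↑) ⊗ₖ B.map (↑) := by
    ext; simp
  rw [hmap, hA, hB, sum_smul_kronecker_sum_smul]
  push_cast
  rfl

theorem qwU_k2_kn_apply_self {n : ℕ} (hn : n ≠ 0) (t : ℝ) (u : Fin 2) (v : Fin n) :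
    qwU (completeAdj 2 ⊗ₖ completeAdj n) t (u, v) (u, v) =
      (((n : ℝ)⁻¹ * Real.cos (((n : ℝ) - 1) * t) + (1 - (n : ℝ)⁻¹) * Real.cos t : ℝ) : ℂ) := by
  rw [qwU_kronecker_eq_sum (completeOrthogonalIdempotents_completeEigenproj two_ne_zero)
    (completeOrthogonalIdempotents_completeEigenproj hn) (completeAdj_map_ofReal two_ne_zero)
    (completeAdj_map_ofReal hn)]
  simp only [Matrix.sum_apply, Matrix.smul_apply, kroneckerMap_apply, Fintype.sum_prod_type,
    Fin.sum_univ_two, completeEigenproj, cons_val_zero, cons_val_one, cons_val_fin_one, of_apply,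
    Matrix.sub_apply, one_apply_eq, smul_eq_mul]
  push_cast [Complex.cos]
  ring_nf

theorem exists_pos_inv_mul_cos_add_eq_zero {a : ℝ} (ha : 2 < a) :
    ∃ t > 0, a⁻¹ * Real.cos ((a - 1) * t) + (1 - a⁻¹) * Real.cos t = 0 := by
  set f : ℝ → ℝ := fun t => a⁻¹ * Real.cos ((a - 1) * t) + (1 - a⁻¹) * Real.cos t
  have hf0 : f 0 = 1 := by simp [f]
  have hfπ : f Real.pi < 0 := by
    have : a⁻¹ < 2⁻¹ := inv_strictAnti₀ two_pos ha
    have := Real.cos_le_one ((a - 1) * Real.pi)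
    simp only [f, Real.cos_pi]
    nlinarith [inv_pos.2 (two_pos.trans ha)]
  obtain ⟨t, ht, hft⟩ := intermediate_value_Ioc' Real.pi_pos.le
    (by fun_prop : Continuous f).continuousOn ⟨hfπ.le, hf0 ▸ one_pos⟩
  exact ⟨t, ht.1, hft⟩

/-- For `n ≥ 3` and the direct product `K_2 × K_n` (adjacency matrix
`A(K_2) ⊗ A(K_n)`), every vertex `(u,v)` has a time `t₀ > 0` at which the diagonal entry
of the transition matrix vanishes; in particular no vertex of `K_2 × K_n` is sedentary:
the infimum over positive times of `|U(t)_{(u,v),(u,v)}|` is zero. -/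
theorem k2_times_kn_not_sedentary {n : ℕ} (hn : 3 ≤ n) (u : Fin 2) (v : Fin n) :
    (∃ t₀ > (0 : ℝ), qwU (completeAdj 2 ⊗ₖ completeAdj n) t₀ (u, v) (u, v) = 0) ∧
    sInf ((fun t => ‖qwU (completeAdj 2 ⊗ₖ completeAdj n) t (u, v) (u, v)‖) ''
        Set.Ioi (0 : ℝ)) = 0 := by
  obtain ⟨t₀, ht₀, hcos⟩ := exists_pos_inv_mul_cos_add_eq_zero (a := n) (by exact_mod_cast hn)
  have hU : qwU (completeAdj 2 ⊗ₖ completeAdj n) t₀ (u, v) (u, v) = 0 := by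
    rw [qwU_k2_kn_apply_self (by omega), hcos, Complex.ofReal_zero]
  refine ⟨⟨t₀, ht₀, hU⟩, IsLeast.csInf_eq ⟨⟨t₀, ht₀, by simp [hU]⟩, ?_⟩⟩
  rintro _ ⟨t, -, rfl⟩
  exact norm_nonneg _
end

section
/- Let X be a graph on n_X vertices, u a vertex of X, and suppose |U_{L(X)}(t)_{u,u}| ≥ C for all t > 0, where C > 2/n_X (u is C-sedentary in X with respect to the Laplacian). Then for every graph Y, the vertex u is (C − 2/n_X)-sedentary in the join X ∨ Y with respect to its Laplacian: |U_{L(X∨Y)}(t)_{u,u}| ≥ C − 2/n_X for all t > 0. -/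
/-- The Laplacian matrix `L = D - A` associated with an adjacency matrix `A`, where `D`
is the diagonal matrix of row sums (degrees). -/
def lap {V : Type*} [Fintype V] [DecidableEq V] (A : Matrix V V ℝ) : Matrix V V ℝ :=
  Matrix.diagonal (fun u => ∑ w, A u w) - A

/-- The adjacency matrix of the join `X ∨ Y` of the graphs with adjacency matrices
`AX` and `AY`: adjacency within each graph is kept, and every vertex of `X` is joined to
every vertex of `Y`. -/
def joinAdj {V W : Type*} (AX : Matrix V V ℝ) (AY : Matrix W W ℝ) :
    Matrix (V ⊕ W) (V ⊕ W) ℝ :=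
  Matrix.of fun x y =>
    match x, y with
    | Sum.inl a, Sum.inl b => AX a b
    | Sum.inr a, Sum.inr b => AY a b
    | _, _ => 1

/-!
Let `n = |V|`, `m = |W|` and `P = I - J/n` the centering matrix on `V`. The Laplacian of the join
acts on zero-sum vectors supported on `V` as `L(X) + m`, i.e. `L(X ∨ Y) [P; 0] = [P; 0] (L(X) + m)`,
so `U_{X∨Y}(t) [P; 0] = e^{itm} [P; 0] U_X(t)`. Since `P` commutes with `L(X)` and `U_X(t)` has row
sums `1`, the `(u, u)` entry of this identity reads
`U_{X∨Y}(t)_{uu} = e^{itm} U_X(t)_{uu} + (s - e^{itm}) / n`, where `s` is the sum of the row `u` of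
`U_{X∨Y}(t)` over `V`. Writing the indicator of `V` in terms of the all-ones vector (eigenvalue `0`)
and the vector equal to `m` on `V` and `-n` on `W` (eigenvalue `n + m`) gives
`s = (n + m e^{it(n+m)}) / (n + m)`, so `|s| ≤ 1`.
-/

open NormedSpace Matrix Nat

open scoped Norms.Operator in
theorem Matrix.exp_mul_eq_mul_exp_of_mul_eq {𝕂 ι κ : Type*} [RCLike 𝕂] [Fintype ι] [DecidableEq ι]
    [Fintype κ] [DecidableEq κ] {A : Matrix ι ι 𝕂} {B : Matrix κ κ 𝕂} {F : Matrix ι κ 𝕂}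
    (h : A * F = F * B) : exp A * F = F * exp B := by
  have hpow (k : ℕ) : A ^ k * F = F * B ^ k := by
    induction k with
    | zero => simp
    | succ k ih =>
      rw [pow_succ, Matrix.mul_assoc, h, ← Matrix.mul_assoc, ih, Matrix.mul_assoc, ← pow_succ]
  have hA : HasSum (fun k => ((k ! : 𝕂)⁻¹ • A ^ k) * F) (exp A * F) :=
    (exp_series_hasSum_exp' A).map (addMonoidHomMulRight F)
      (continuous_id.matrix_mul continuous_const)
  have hB : HasSum (fun k => F * ((k ! : 𝕂)⁻¹ • B ^ k)) (F * exp B) :=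
    (exp_series_hasSum_exp' B).map (addMonoidHomMulLeft F)
      (continuous_const.matrix_mul continuous_id)
  simp only [Matrix.smul_mul, Matrix.mul_smul, hpow] at hA hB
  exact hA.unique hB

theorem Matrix.exp_smul_one {𝕂 ι : Type*} [RCLike 𝕂] [Fintype ι] [DecidableEq ι] (c : 𝕂) :
    exp (c • (1 : Matrix ι ι 𝕂)) = exp c • 1 := by
  rw [smul_one_eq_diagonal, exp_diagonal, Pi.exp_def, smul_one_eq_diagonal]

theorem Matrix.exp_mulVec_of_mulVec_eq_smul_s19 {𝕂 ι : Type*} [RCLike 𝕂] [Fintype ι] [DecidableEq ι]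
    {A : Matrix ι ι 𝕂} {v : ι → 𝕂} {c : 𝕂} (h : A *ᵥ v = c • v) :
    exp A *ᵥ v = exp c • v := by
  have hcol : A * replicateCol Unit v = replicateCol Unit v * c • (1 : Matrix Unit Unit 𝕂) := by
    rw [← replicateCol_mulVec, h, Matrix.mul_smul, Matrix.mul_one, replicateCol_smul]
  have hexp := exp_mul_eq_mul_exp_of_mul_eq hcol
  rw [exp_smul_one, Matrix.mul_smul, Matrix.mul_one, ← replicateCol_mulVec, ← replicateCol_smul]
    at hexp
  exact replicateCol_injective hexp

section QuantumWalk

variable {ι κ : Type*} [Fintype ι] [DecidableEq ι] [Fintype κ] [DecidableEq κ]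

theorem qwU_mul_map_ofReal {M : Matrix ι ι ℝ} {N : Matrix κ κ ℝ} {F : Matrix ι κ ℝ}
    (h : M * F = F * N) (t : ℝ) :
    qwU M t * F.map ((↑) : ℝ → ℂ) = F.map ((↑) : ℝ → ℂ) * qwU N t := by
  refine exp_mul_eq_mul_exp_of_mul_eq ?_
  rw [Matrix.smul_mul, Matrix.mul_smul]
  congr 1
  have hC := congrArg (Matrix.map · Complex.ofRealHom) h
  rwa [Matrix.map_mul, Matrix.map_mul] at hC

theorem qwU_mulVec_of_mulVec_eq_smul_s19 {M : Matrix ι ι ℝ} {v : ι → ℝ} {c : ℝ} (h : M *ᵥ v = c • v)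
    (t : ℝ) :
    qwU M t *ᵥ ((↑) ∘ v) = Complex.exp (Complex.I * t * c) • ((↑) ∘ v : ι → ℂ) := by
  rw [Complex.exp_eq_exp_ℂ]
  refine exp_mulVec_of_mulVec_eq_smul_s19 ?_
  have hC : M.map ((↑) : ℝ → ℂ) *ᵥ ((↑) ∘ v) = (c : ℂ) • ((↑) ∘ v) := by
    ext i
    rw [Pi.smul_apply, Function.comp_apply, smul_eq_mul, ← Complex.ofReal_mul, ← smul_eq_mul,
      ← Pi.smul_apply, ← h]
    exact (RingHom.map_mulVec Complex.ofRealHom M v i).symm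
  rw [smul_mulVec, hC, smul_smul]

theorem qwU_add_smul_one (M : Matrix ι ι ℝ) (c t : ℝ) :
    qwU (M + c • 1) t = Complex.exp (Complex.I * t * c) • qwU M t := by
  have hsplit : (Complex.I * t) • (M + c • 1).map ((↑) : ℝ → ℂ) =
      (Complex.I * t) • M.map (↑) + (Complex.I * t * c) • 1 := by
    ext i j
    by_cases hij : i = j <;> simp [one_apply, hij]; ring
  rw [qwU, hsplit, Matrix.exp_add_of_commute _ _
    ((Commute.one_right _).smul_right _), exp_smul_one, Matrix.mul_smul, Matrix.mul_one,
    Complex.exp_eq_exp_ℂ, qwU]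

theorem norm_exp_I_mul_ofReal_mul_ofReal (t c : ℝ) : ‖Complex.exp (Complex.I * t * c)‖ = 1 := by
  rw [mul_assoc, ← Complex.ofReal_mul, Complex.norm_exp_I_mul_ofReal]

end QuantumWalk

section Laplacian

variable {V W : Type*} [Fintype V] [DecidableEq V]

def allOnes (m n : Type*) : Matrix m n ℝ := of fun _ _ => 1

noncomputable def centeringMatrix (V : Type*) [Fintype V] [DecidableEq V] : Matrix V V ℝ :=
  1 - (Fintype.card V : ℝ)⁻¹ • allOnes V V

theorem sum_lap_apply (A : Matrix V V ℝ) (a : V) : ∑ b, lap A a b = 0 := by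
  simp [lap, diagonal_apply, Finset.sum_sub_distrib]

theorem lap_isSymm {A : Matrix V V ℝ} (hA : A.IsSymm) : (lap A).IsSymm :=
  (isSymm_diagonal _).sub hA

theorem lap_mulVec_const (A : Matrix V V ℝ) (c : ℝ) : lap A *ᵥ (fun _ => c) = 0 := by
  ext a
  simp [mulVec, dotProduct, ← Finset.sum_mul, sum_lap_apply]

theorem lap_mul_allOnes (A : Matrix V V ℝ) : lap A * allOnes V W = 0 := by
  ext a c
  simp [mul_apply, allOnes, sum_lap_apply]

theorem allOnes_mul_lap {A : Matrix V V ℝ} (hA : A.IsSymm) : allOnes W V * lap A = 0 := by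
  rw [← (lap_isSymm hA).eq, ← transpose_transpose (allOnes W V), ← transpose_mul]
  exact transpose_eq_zero.mpr (lap_mul_allOnes A)

theorem allOnes_mul_allOnes {l m n : Type*} [Fintype m] :
    allOnes l m * allOnes m n = (Fintype.card m : ℝ) • allOnes l n := by
  ext i k
  simp [mul_apply, allOnes]

theorem lap_mul_centeringMatrix (A : Matrix V V ℝ) : lap A * centeringMatrix V = lap A := by
  simp [centeringMatrix, Matrix.mul_sub, lap_mul_allOnes]

theorem centeringMatrix_mul_lap {A : Matrix V V ℝ} (hA : A.IsSymm) :
    centeringMatrix V * lap A = lap A := by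
  simp [centeringMatrix, Matrix.sub_mul, allOnes_mul_lap hA]

theorem allOnes_mul_centeringMatrix [Nonempty V] : allOnes W V * centeringMatrix V = 0 := by
  simp [centeringMatrix, Matrix.mul_sub, allOnes_mul_allOnes, smul_smul]

theorem mul_map_centeringMatrix_apply {ι : Type*} (M : Matrix ι V ℂ) (i : ι) (j : V) :
    (M * (centeringMatrix V).map ((↑) : ℝ → ℂ)) i j =
      M i j - (Fintype.card V : ℂ)⁻¹ * ∑ b, M i b := by
  simp [mul_apply, centeringMatrix, allOnes, one_apply, apply_ite ((↑) : ℝ → ℂ), mul_sub,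
    Finset.sum_sub_distrib, ← Finset.sum_mul, mul_comm]

theorem mul_map_fromRows_centeringMatrix_apply {ι : Type*} [Fintype W] (M : Matrix ι (V ⊕ W) ℂ)
    (i : ι) (j : V) :
    (M * (fromRows (centeringMatrix V) (0 : Matrix W V ℝ)).map ((↑) : ℝ → ℂ)) i j =
      M i (Sum.inl j) - (Fintype.card V : ℂ)⁻¹ * ∑ a, M i (Sum.inl a) := by
  have h := mul_map_centeringMatrix_apply (M.submatrix id Sum.inl) i j
  simp only [submatrix_apply, id] at h
  rw [← h]
  simp [mul_apply, Fintype.sum_sum_type]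

theorem lap_joinAdj [Fintype W] [DecidableEq W] (AX : Matrix V V ℝ) (AY : Matrix W W ℝ) :
    lap (joinAdj AX AY) = fromBlocks (lap AX + (Fintype.card W : ℝ) • 1) (-allOnes V W)
      (-allOnes W V) (lap AY + (Fintype.card V : ℝ) • 1) := by
  ext (a | c) (b | d) <;>
    simp [lap, joinAdj, allOnes, diagonal_apply, one_apply, Fintype.sum_sum_type] <;>
    split_ifs <;> ring

theorem lap_joinAdj_mul_fromRows [Fintype W] [DecidableEq W] [Nonempty V] {AX : Matrix V V ℝ}
    (hX : AX.IsSymm) (AY : Matrix W W ℝ) :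
    lap (joinAdj AX AY) * fromRows (centeringMatrix V) (0 : Matrix W V ℝ) =
      fromRows (centeringMatrix V) (0 : Matrix W V ℝ) * (lap AX + (Fintype.card W : ℝ) • 1) := by
  rw [lap_joinAdj, fromBlocks_mul_fromRows, fromRows_mul]
  simp [Matrix.add_mul, Matrix.mul_add, lap_mul_centeringMatrix, centeringMatrix_mul_lap hX,
    allOnes_mul_centeringMatrix]

theorem lap_joinAdj_mulVec_sumElim [Fintype W] [DecidableEq W] (AX : Matrix V V ℝ)
    (AY : Matrix W W ℝ) :
    lap (joinAdj AX AY) *ᵥ Sum.elim (fun _ => (Fintype.card W : ℝ)) (fun _ => -Fintype.card V) =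
      ((Fintype.card V + Fintype.card W : ℕ) : ℝ) •
        Sum.elim (fun _ => (Fintype.card W : ℝ)) (fun _ => -Fintype.card V) := by
  rw [lap_joinAdj, fromBlocks_mulVec]
  simp only [Function.comp_def, Sum.elim_inl, Sum.elim_inr, add_mulVec, neg_mulVec,
    smul_mulVec, one_mulVec, lap_mulVec_const]
  ext (a | c) <;> simp [allOnes, mulVec, dotProduct] <;> ring

end Laplacian

theorem qwU_lap_mulVec_one {V : Type*} [Fintype V] [DecidableEq V] (A : Matrix V V ℝ) (t : ℝ) :
    qwU (lap A) t *ᵥ (fun _ => 1) = fun _ => 1 := by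
  simpa [Function.comp_def] using qwU_mulVec_of_mulVec_eq_smul_s19 (c := 0) (v := fun _ => (1 : ℝ))
    (by rw [lap_mulVec_const, zero_smul]) t

section Join

variable {V W : Type*} [Fintype V] [DecidableEq V] [Fintype W] [DecidableEq W]

theorem sum_qwU_lap_joinAdj_inl (AX : Matrix V V ℝ) (AY : Matrix W W ℝ) (x : V) (t : ℝ) :
    ∑ a, qwU (lap (joinAdj AX AY)) t (Sum.inl x) (Sum.inl a) =
      (Fintype.card V + Fintype.card W *
          Complex.exp (Complex.I * t * (Fintype.card V + Fintype.card W : ℕ))) /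
        (Fintype.card V + Fintype.card W) := by
  have hN : (Fintype.card V + Fintype.card W : ℂ) ≠ 0 := by
    have := Fintype.card_pos_iff.mpr ⟨x⟩
    exact_mod_cast (by omega : Fintype.card V + Fintype.card W ≠ 0)
  set f : V ⊕ W → ℝ := Sum.elim (fun _ => (Fintype.card W : ℝ)) (fun _ => -Fintype.card V)
  have hsplit : (Sum.elim (fun _ => 1) 0 : V ⊕ W → ℂ) =
      (Fintype.card V + Fintype.card W : ℂ)⁻¹ •
        ((Fintype.card V : ℂ) • (fun _ => 1) + ((↑) ∘ f)) := by
    ext (a | c) <;> simp [f, hN]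
  have hsum : ∑ a, qwU (lap (joinAdj AX AY)) t (Sum.inl x) (Sum.inl a) =
      (qwU (lap (joinAdj AX AY)) t *ᵥ Sum.elim (fun _ => 1) 0) (Sum.inl x) := by
    simp [mulVec, dotProduct, Fintype.sum_sum_type]
  rw [hsum, hsplit, mulVec_smul, mulVec_add, mulVec_smul, qwU_lap_mulVec_one,
    qwU_mulVec_of_mulVec_eq_smul_s19 (lap_joinAdj_mulVec_sumElim AX AY) t]
  simp
  field_simp

theorem norm_sum_qwU_lap_joinAdj_inl_le_one (AX : Matrix V V ℝ) (AY : Matrix W W ℝ) (x : V)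
    (t : ℝ) : ‖∑ a, qwU (lap (joinAdj AX AY)) t (Sum.inl x) (Sum.inl a)‖ ≤ 1 := by
  have hphase : ‖Complex.exp (Complex.I * t * (Fintype.card V + Fintype.card W : ℕ))‖ = 1 := by
    simpa using norm_exp_I_mul_ofReal_mul_ofReal t (Fintype.card V + Fintype.card W : ℕ)
  have hden : ‖(Fintype.card V + Fintype.card W : ℂ)‖ = Fintype.card V + Fintype.card W := by
    exact_mod_cast Complex.norm_natCast (Fintype.card V + Fintype.card W)
  have hpos : (0 : ℝ) < Fintype.card V + Fintype.card W := by
    have := Fintype.card_pos_iff.mpr ⟨x⟩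
    positivity
  rw [sum_qwU_lap_joinAdj_inl, norm_div, hden, div_le_one hpos]
  calc _ ≤ ‖(Fintype.card V : ℂ)‖ + ‖(Fintype.card W : ℂ) *
        Complex.exp (Complex.I * t * (Fintype.card V + Fintype.card W : ℕ))‖ := norm_add_le _ _
    _ = Fintype.card V + Fintype.card W := by
      rw [norm_mul, hphase, mul_one, Complex.norm_natCast, Complex.norm_natCast]

theorem qwU_lap_joinAdj_inl_inl {AX : Matrix V V ℝ} (hX : AX.IsSymm) (AY : Matrix W W ℝ) (u : V)
    (t : ℝ) :
    qwU (lap (joinAdj AX AY)) t (Sum.inl u) (Sum.inl u) =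
      Complex.exp (Complex.I * t * Fintype.card W) * qwU (lap AX) t u u +
        (Fintype.card V : ℂ)⁻¹ * (∑ a, qwU (lap (joinAdj AX AY)) t (Sum.inl u) (Sum.inl a) -
          Complex.exp (Complex.I * t * Fintype.card W)) := by
  have : Nonempty V := ⟨u⟩
  have hcomm := qwU_mul_map_ofReal
    ((lap_mul_centeringMatrix AX).trans (centeringMatrix_mul_lap hX).symm) t
  have hrow : ∑ b, qwU (lap AX) t u b = 1 := by
    simpa [mulVec, dotProduct] using congrFun (qwU_lap_mulVec_one AX t) u
  have hint := qwU_mul_map_ofReal (lap_joinAdj_mul_fromRows hX AY) t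
  rw [qwU_add_smul_one, Matrix.mul_smul] at hint
  replace hint := congrFun (congrFun hint (Sum.inl u)) u
  rw [Matrix.smul_apply, mul_map_fromRows_centeringMatrix_apply, fromRows_map, fromRows_mul,
    fromRows_apply_inl, ← hcomm, mul_map_centeringMatrix_apply, hrow] at hint
  linear_combination hint

theorem abs_norm_qwU_lap_joinAdj_sub_le {AX : Matrix V V ℝ} (hX : AX.IsSymm) (AY : Matrix W W ℝ)
    (u : V) (t : ℝ) :
    |‖qwU (lap (joinAdj AX AY)) t (Sum.inl u) (Sum.inl u)‖ - ‖qwU (lap AX) t u u‖| ≤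
      2 / Fintype.card V := by
  set e := Complex.exp (Complex.I * t * Fintype.card W)
  have hn : (0 : ℝ) < Fintype.card V := by
    have := Fintype.card_pos_iff.mpr ⟨u⟩
    positivity
  have he : ‖e‖ = 1 := by simpa using norm_exp_I_mul_ofReal_mul_ofReal t (Fintype.card W)
  calc |‖qwU (lap (joinAdj AX AY)) t (Sum.inl u) (Sum.inl u)‖ - ‖qwU (lap AX) t u u‖|
      = |‖qwU (lap (joinAdj AX AY)) t (Sum.inl u) (Sum.inl u)‖ - ‖e * qwU (lap AX) t u u‖| := by
        rw [norm_mul, he, one_mul]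
    _ ≤ ‖qwU (lap (joinAdj AX AY)) t (Sum.inl u) (Sum.inl u) - e * qwU (lap AX) t u u‖ :=
        abs_norm_sub_norm_le _ _
    _ = (Fintype.card V : ℝ)⁻¹ *
          ‖∑ a, qwU (lap (joinAdj AX AY)) t (Sum.inl u) (Sum.inl a) - e‖ := by
        rw [qwU_lap_joinAdj_inl_inl hX, add_sub_cancel_left, norm_mul, norm_inv,
          Complex.norm_natCast]
    _ ≤ (Fintype.card V : ℝ)⁻¹ * (1 + 1) := by
        gcongr
        exact (norm_sub_le _ _).trans
          (add_le_add (norm_sum_qwU_lap_joinAdj_inl_le_one AX AY u t) he.le)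
    _ = 2 / Fintype.card V := by ring

end Join

theorem join_preserves_sedentary_general {V W : Type*} [Fintype V] [DecidableEq V]
    [Fintype W] [DecidableEq W]
    (AX : Matrix V V ℝ) (hXsymm : AX.IsSymm)
    (AY : Matrix W W ℝ)
    (u : V) (C : ℝ)
    (hsed : ∀ t > (0 : ℝ), C ≤ ‖qwU (lap AX) t u u‖) :
    ∀ t > (0 : ℝ), C - 2 / (Fintype.card V : ℝ) ≤
      ‖qwU (lap (joinAdj AX AY)) t (Sum.inl u) (Sum.inl u)‖ := by
  intro t ht
  have hclose := abs_le.mp (abs_norm_qwU_lap_joinAdj_sub_le hXsymm AY u t)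
  linarith [hsed t ht, hclose.1]

/-- If a vertex `u` of a graph `X` on `n_X` vertices is `C`-sedentary with respect to
the Laplacian, with `C > 2/n_X`, then for every graph `Y` the vertex `u` is
`(C - 2/n_X)`-sedentary in the join `X ∨ Y` with respect to its Laplacian. -/
theorem join_preserves_sedentary {V W : Type*} [Fintype V] [DecidableEq V]
    [Fintype W] [DecidableEq W]
    (AX : Matrix V V ℝ) (hXsymm : AX.IsSymm) (hXloop : ∀ a, AX a a = 0)
    (hX01 : ∀ a b, AX a b = 0 ∨ AX a b = 1)
    (AY : Matrix W W ℝ) (hYsymm : AY.IsSymm) (hYloop : ∀ a, AY a a = 0)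
    (hY01 : ∀ a b, AY a b = 0 ∨ AY a b = 1)
    (u : V) (C : ℝ) (hC : 2 / (Fintype.card V : ℝ) < C)
    (hsed : ∀ t > (0 : ℝ), C ≤ ‖qwU (lap AX) t u u‖) :
    ∀ t > (0 : ℝ), C - 2 / (Fintype.card V : ℝ) ≤
      ‖qwU (lap (joinAdj AX AY)) t (Sum.inl u) (Sum.inl u)‖ :=
  join_preserves_sedentary_general AX hXsymm AY u C hsed
end
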